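/- arXiv:1607.05825 — 5 statements merged into one kernel-verified Lean document; each statement's English description precedes it below -/
import Mathlib

section
/- The Thue-Morse word is overlap-free: if a, b, n are positive integers with a < b ≤ a + n, then the factor t_a t_{a+1} ... t_{a+n} is not equal to the factor t_b t_{b+1} ... t_{b+n}. -/
/-!
Write `t` for the Thue-Morse sequence indexed from 0, so `t (2n + r) = t n + r` in `ZMod 2`. In
particular `t (2n) ≠ t (2n + 1)`, hence no three consecutive terms of `t` are equal, which excludes
overlaps of period 1. Suppose `t` has an overlap of least period `p > 1`. If `p` is even, the
positions of the parity of its start form an overlap of period `p / 2`. If `p` is odd, the shift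
by `p` swaps parities, so comparing `t k + t (k + 1)` with its shifted copy, where one of the two
sums is `1`, gives `t u = t (u + 1)` for two consecutive `u`: three equal consecutive terms.
-/

open Filter

/-- The Thue-Morse word, indexed from 1: `tm i` is the parity of the number of
1's in the binary expansion of `i - 1`. -/
def tm (i : ℕ) : ℕ := (Nat.digits 2 (i - 1)).sum % 2

/-- The factor `t_a t_{a+1} ⋯ t_b` of the Thue-Morse word. -/
def seg (a b : ℕ) : List ℕ := (List.range (b + 1 - a)).map (fun j => tm (a + j))

/-- The `i`-th block of length `m` of the Thue-Morse word (blocks indexed from 0):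
`t_{im+1} ⋯ t_{(i+1)m}`. -/
def block (m i : ℕ) : List ℕ := seg (i * m + 1) ((i + 1) * m)

/-- The prefix of the Thue-Morse word of length `k * m` is a `k`-anti-power:
its `k` consecutive blocks of length `m` are pairwise distinct. -/
def IsAntiPowerPrefix (m k : ℕ) : Prop :=
  ∀ i j, i < k → j < k → i ≠ j → block m i ≠ block m j

/-- `w` is a factor (contiguous substring) of the Thue-Morse word. -/
def IsFactor (w : List ℕ) : Prop :=
  ∃ a : ℕ, w = (List.range w.length).map (fun j => tm (a + 1 + j))

/-- `δ(m) = ⌈log₂ (m/3)⌉` (a nonnegative integer for `m ≥ 2`). -/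
noncomputable def delta (m : ℕ) : ℕ := (⌈Real.logb 2 ((m : ℝ) / 3)⌉).toNat

/-- `⌈log₂ m⌉`. -/
noncomputable def ell (m : ℕ) : ℕ := (⌈Real.logb 2 (m : ℝ)⌉).toNat

/-- `K(m)`: the smallest `k` such that the prefix of the Thue-Morse word of
length `k * m` is not a `k`-anti-power. -/
noncomputable def Kap (m : ℕ) : ℕ := sInf {k | ¬ IsAntiPowerPrefix m k}

/-- `γ(k)`: the smallest odd positive integer `m` such that the prefix of the
Thue-Morse word of length `k * m` is a `k`-anti-power. -/
noncomputable def gam (k : ℕ) : ℕ := sInf {m | Odd m ∧ IsAntiPowerPrefix m k}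

/-- `Γ(k)`: the largest odd positive integer `m` such that the prefix of the
Thue-Morse word of length `k * m` is not a `k`-anti-power. -/
noncomputable def Gam (k : ℕ) : ℕ := sSup {m | Odd m ∧ ¬ IsAntiPowerPrefix m k}

/-- The Thue-Morse morphism `μ` (0 ↦ 01, 1 ↦ 10) on words. -/
def mu (w : List ℕ) : List ℕ := w.flatMap (fun a => if a = 0 then [0, 1] else [1, 0])

/-- The Thue-Morse sequence indexed from 0 (`tm` is indexed from 1), with values in `ZMod 2`. -/
def thueMorse (n : ℕ) : ZMod 2 := ((Nat.digits 2 n).sum : ZMod 2)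

theorem thueMorse_eq_div_two_add_mod (n : ℕ) :
    thueMorse n = thueMorse (n / 2) + (n % 2 : ℕ) := by
  rcases Nat.eq_zero_or_pos n with rfl | hn
  · simp
  · rw [thueMorse, Nat.digits_eq_cons_digits_div one_lt_two hn.ne', List.sum_cons,
      Nat.cast_add, add_comm]
    rfl

theorem thueMorse_two_mul (n : ℕ) : thueMorse (2 * n) = thueMorse n := by
  rw [thueMorse_eq_div_two_add_mod]
  simp

theorem thueMorse_two_mul_add_one (n : ℕ) : thueMorse (2 * n + 1) = thueMorse n + 1 := by
  rw [thueMorse_eq_div_two_add_mod, show (2 * n + 1) / 2 = n by omega,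
    show (2 * n + 1) % 2 = 1 by omega, Nat.cast_one]

theorem thueMorse_two_mul_ne (n : ℕ) : thueMorse (2 * n) ≠ thueMorse (2 * n + 1) := by
  rw [thueMorse_two_mul_add_one, thueMorse_two_mul]
  simp

theorem tm_add_one_eq_iff (i j : ℕ) : tm (i + 1) = tm (j + 1) ↔ thueMorse i = thueMorse j :=
  (ZMod.natCast_eq_natCast_iff' _ _ 2).symm

/-- The factor `x i ⋯ x (i + 2 * p)` has period `p`. -/
def HasOverlapAt {α : Type*} (x : ℕ → α) (i p : ℕ) : Prop :=
  ∀ j ≤ p, x (i + j) = x (i + j + p)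

theorem thueMorse_not_three_eq (n : ℕ) :
    ¬ (thueMorse n = thueMorse (n + 1) ∧ thueMorse (n + 1) = thueMorse (n + 2)) := by
  rintro ⟨h₀, h₁⟩
  rcases Nat.even_or_odd' n with ⟨m, rfl | rfl⟩
  · exact thueMorse_two_mul_ne m h₀
  · exact thueMorse_two_mul_ne (m + 1) h₁

theorem HasOverlapAt.thueMorse_half {i q : ℕ} (h : HasOverlapAt thueMorse i (2 * q)) :
    HasOverlapAt thueMorse (i / 2) q := by
  intro j hj
  have hij := h (2 * j) (by omega)
  rw [thueMorse_eq_div_two_add_mod (i + 2 * j), thueMorse_eq_div_two_add_mod (i + 2 * j + 2 * q),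
    show (i + 2 * j) / 2 = i / 2 + j by omega, show (i + 2 * j + 2 * q) / 2 = i / 2 + j + q by omega,
    show (i + 2 * j + 2 * q) % 2 = (i + 2 * j) % 2 by omega] at hij
  exact add_right_cancel hij

theorem HasOverlapAt.add_succ_eq {α : Type*} [Add α] {x : ℕ → α} {i p k : ℕ}
    (h : HasOverlapAt x i p) (hik : i ≤ k) (hki : k < i + p) :
    x k + x (k + 1) = x (k + p) + x (k + 1 + p) := by
  have h₀ := h (k - i) (by omega)
  have h₁ := h (k - i + 1) (by omega)
  rw [show i + (k - i) = k by omega] at h₀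
  rw [show i + (k - i + 1) = k + 1 by omega] at h₁
  rw [h₀, h₁]

theorem thueMorse_not_hasOverlapAt_odd (i q : ℕ) (hq : 0 < q) :
    ¬ HasOverlapAt thueMorse i (2 * q + 1) := by
  intro h
  have heven : ∀ u, i ≤ 2 * u → 2 * u < i + (2 * q + 1) →
      thueMorse (u + q) = thueMorse (u + q + 1) := by
    intro u h₁ h₂
    have := h.add_succ_eq h₁ h₂
    rw [show 2 * u + (2 * q + 1) = 2 * (u + q) + 1 by omega,
      show 2 * u + 1 + (2 * q + 1) = 2 * (u + q + 1) by omega, thueMorse_two_mul,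
      thueMorse_two_mul, thueMorse_two_mul_add_one, thueMorse_two_mul_add_one] at this
    grind
  have hodd : ∀ u, i ≤ 2 * u + 1 → 2 * u + 1 < i + (2 * q + 1) →
      thueMorse u = thueMorse (u + 1) := by
    intro u h₁ h₂
    have := h.add_succ_eq h₁ h₂
    rw [show 2 * u + 1 + 1 = 2 * (u + 1) by omega,
      show 2 * u + 1 + (2 * q + 1) = 2 * (u + q + 1) by omega,
      show 2 * (u + 1) + (2 * q + 1) = 2 * (u + q + 1) + 1 by omega, thueMorse_two_mul,
      thueMorse_two_mul, thueMorse_two_mul_add_one, thueMorse_two_mul_add_one] at this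
    grind
  rcases Nat.even_or_odd' i with ⟨m, rfl | rfl⟩
  · refine thueMorse_not_three_eq (m + q) ⟨heven m (by omega) (by omega), ?_⟩
    simpa [add_right_comm] using heven (m + 1) (by omega) (by omega)
  · exact thueMorse_not_three_eq m
      ⟨hodd m (by omega) (by omega), hodd (m + 1) (by omega) (by omega)⟩

theorem thueMorse_not_hasOverlapAt (i p : ℕ) (hp : 0 < p) : ¬ HasOverlapAt thueMorse i p := by
  induction p using Nat.strong_induction_on generalizing i with
  | _ p ih =>
  rcases Nat.even_or_odd' p with ⟨q, rfl | rfl⟩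
  · exact fun h => ih q (by omega) (i / 2) (by omega) h.thueMorse_half
  · rcases Nat.eq_zero_or_pos q with rfl | hq
    · intro h
      refine thueMorse_not_three_eq i ⟨h 0 (by omega), ?_⟩
      simpa using h 1 (by omega)
    · exact thueMorse_not_hasOverlapAt_odd i q hq

theorem stmt0_general (a b n : ℕ) (ha : 0 < a) (hab : a < b) (hba : b ≤ a + n) :
    seg a (a + n) ≠ seg b (b + n) := by
  intro heq
  rw [seg, seg, show a + n + 1 - a = n + 1 by omega, show b + n + 1 - b = n + 1 by omega,
    List.map_inj_left] at heq
  refine thueMorse_not_hasOverlapAt (a - 1) (b - a) (by omega) fun j hj => ?_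
  have hj := heq j (List.mem_range.mpr (by omega))
  rwa [show a + j = a - 1 + j + 1 by omega, show b + j = a - 1 + j + (b - a) + 1 by omega,
    tm_add_one_eq_iff] at hj

theorem stmt0 (a b n : ℕ) (ha : 0 < a) (hn : 0 < n) (hab : a < b) (hba : b ≤ a + n) :
    seg a (a + n) ≠ seg b (b + n) :=
  stmt0_general a b n ha hab hba
end

section
/- If y and v are finite words such that yvy is a factor of the Thue-Morse word and |y| = m ≥ 2, then 2^{⌈log₂(m/3)⌉} divides |yv|. -/
open Filter

/-!
Write `t` for the Thue-Morse sequence indexed from `0`, so that `t (2n + r) = t n + r (mod 2)`.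
If `yvy` occurs at position `a`, then `t` agrees with its shift by `p = |yv|` on `[a, a + m)`.
A window of length `4` already forces `p` to be even: matching an even position against an odd
one would produce a cube `000` or `111` in `t`. Once `p = 2q`, the agreement descends to a window
of half the length at `a / 2` with shift `q`. Iterating, a window longer than `3 · 2^k` forces
`2^(k+1) ∣ p`, and `δ(m) = k + 1` says precisely that `m > 3 · 2^k`.
-/

namespace ThueMorse

def thueMorse (n : ℕ) : ℕ := (Nat.digits 2 n).sum % 2

lemma tm_succ (n : ℕ) : tm (n + 1) = thueMorse n := rfl

lemma thueMorse_lt_two (n : ℕ) : thueMorse n < 2 := Nat.mod_lt _ two_pos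

lemma thueMorse_two_mul_add (n r : ℕ) (hr : r < 2) :
    thueMorse (2 * n + r) = (thueMorse n + r) % 2 := by
  rcases Nat.eq_zero_or_pos n with rfl | hn
  · interval_cases r <;> simp [thueMorse]
  · unfold thueMorse
    rw [Nat.digits_def' one_lt_two (by omega), show (2 * n + r) % 2 = r by omega,
      show (2 * n + r) / 2 = n by omega, List.sum_cons]
    omega

lemma thueMorse_two_mul (n : ℕ) : thueMorse (2 * n) = thueMorse n := by
  simpa [Nat.mod_eq_of_lt (thueMorse_lt_two n)] using thueMorse_two_mul_add n 0 two_pos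

lemma thueMorse_two_mul_add_one (n : ℕ) : thueMorse (2 * n + 1) = (thueMorse n + 1) % 2 :=
  thueMorse_two_mul_add n 1 one_lt_two

lemma thueMorse_not_cube (n : ℕ) :
    thueMorse n ≠ thueMorse (n + 1) ∨ thueMorse (n + 1) ≠ thueMorse (n + 2) := by
  obtain ⟨x, r, hr, rfl⟩ : ∃ x r, r < 2 ∧ n = 2 * x + r := ⟨n / 2, n % 2, by omega, by omega⟩
  have := thueMorse_lt_two x
  have := thueMorse_lt_two (x + 1)
  interval_cases r
  · left
    rw [thueMorse_two_mul_add x 0 two_pos, thueMorse_two_mul_add_one]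
    omega
  · right
    rw [show 2 * x + 1 + 1 = 2 * (x + 1) by ring, show 2 * x + 1 + 2 = 2 * (x + 1) + 1 by ring,
      thueMorse_two_mul, thueMorse_two_mul_add_one]
    omega

def AgreesOn (a p m : ℕ) : Prop := ∀ i < m, thueMorse (a + i) = thueMorse (a + p + i)

lemma exists_thueMorse_ne_of_even_odd (x y : ℕ) :
    ∃ i < 4, thueMorse (2 * x + i) ≠ thueMorse (2 * y + 1 + i) := by
  by_contra! h
  have h0 := h 0 (by norm_num)
  have h1 := h 1 (by norm_num)
  have h2 := h 2 (by norm_num)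
  have h3 := h 3 (by norm_num)
  rw [add_zero, add_zero, thueMorse_two_mul, thueMorse_two_mul_add_one] at h0
  rw [show 2 * y + 1 + 1 = 2 * (y + 1) by ring, thueMorse_two_mul_add_one,
    thueMorse_two_mul] at h1
  rw [show 2 * x + 2 = 2 * (x + 1) by ring, show 2 * y + 1 + 2 = 2 * (y + 1) + 1 by ring,
    thueMorse_two_mul, thueMorse_two_mul_add_one] at h2
  rw [show 2 * x + 3 = 2 * (x + 1) + 1 by ring, show 2 * y + 1 + 3 = 2 * (y + 2) by ring,
    thueMorse_two_mul_add_one, thueMorse_two_mul] at h3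
  have := thueMorse_lt_two x
  have := thueMorse_lt_two (x + 1)
  have := thueMorse_lt_two y
  rcases thueMorse_not_cube y with hc | hc <;> omega

lemma even_of_agreesOn {a p m : ℕ} (hm : 4 ≤ m) (h : AgreesOn a p m) : Even p := by
  by_contra hp
  rw [Nat.not_even_iff_odd] at hp
  obtain ⟨x, hx | hx⟩ := Nat.even_or_odd' a
  · obtain ⟨i, hi, hne⟩ := exists_thueMorse_ne_of_even_odd x ((a + p) / 2)
    refine hne ?_
    rw [← hx, show 2 * ((a + p) / 2) + 1 = a + p by grind]
    exact h i (by omega)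
  · obtain ⟨i, hi, hne⟩ := exists_thueMorse_ne_of_even_odd ((a + p) / 2) x
    refine hne ?_
    rw [← hx, show 2 * ((a + p) / 2) = a + p by grind]
    exact (h i (by omega)).symm

lemma AgreesOn.half {a p m : ℕ} (h : AgreesOn a (2 * p) m) :
    AgreesOn (a / 2) p ((m + 1) / 2) := by
  intro j hj
  have hr : a % 2 < 2 := Nat.mod_lt _ two_pos
  have key := h (2 * j) (by omega)
  rw [show a + 2 * j = 2 * (a / 2 + j) + a % 2 by omega,
    show a + 2 * p + 2 * j = 2 * (a / 2 + p + j) + a % 2 by omega,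
    thueMorse_two_mul_add _ _ hr, thueMorse_two_mul_add _ _ hr] at key
  have := thueMorse_lt_two (a / 2 + j)
  have := thueMorse_lt_two (a / 2 + p + j)
  omega

lemma two_pow_succ_dvd_of_agreesOn (k : ℕ) :
    ∀ {a p m : ℕ}, 3 * 2 ^ k < m → AgreesOn a p m → 2 ^ (k + 1) ∣ p := by
  induction k with
  | zero => exact fun hm h => even_iff_two_dvd.mp (even_of_agreesOn hm h)
  | succ k ih =>
    intro a p m hm h
    rw [pow_succ] at hm
    have := Nat.one_le_two_pow (n := k)
    obtain ⟨q, rfl⟩ := even_iff_two_dvd.mp (even_of_agreesOn (by omega) h)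
    rw [pow_succ']
    exact mul_dvd_mul_left 2 (ih (by omega) h.half)

lemma three_mul_two_pow_lt_of_delta_eq_succ {m k : ℕ} (hk : delta m = k + 1) :
    3 * 2 ^ k < m := by
  have hceil : (k : ℤ) < ⌈Real.logb 2 ((m : ℝ) / 3)⌉ := by
    unfold delta at hk
    omega
  have hm : 0 < m := Nat.pos_of_ne_zero (by rintro rfl; simp at hceil; omega)
  rw [Int.lt_ceil, Int.cast_natCast,
    Real.lt_logb_iff_rpow_lt one_lt_two (by positivity), Real.rpow_natCast] at hceil
  exact_mod_cast (lt_div_iff₀' three_pos).mp hceil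

lemma agreesOn_of_isFactor {y v : List ℕ} (h : IsFactor (y ++ v ++ y)) :
    ∃ a, AgreesOn a (y ++ v).length y.length := by
  obtain ⟨a, ha⟩ := h
  refine ⟨a, fun i hi => ?_⟩
  have h1 := List.getElem_of_eq ha (i := i) (by simp; omega)
  have h2 := List.getElem_of_eq ha (i := (y ++ v).length + i) (by simp; omega)
  simp only [List.getElem_map, List.getElem_range] at h1 h2
  rw [List.getElem_append_left (by simp; omega), List.getElem_append_left (by omega)] at h1
  rw [List.getElem_append_right (by simp)] at h2
  simp only [Nat.add_sub_cancel_left] at h2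
  rw [← tm_succ, ← tm_succ, show a + i + 1 = a + 1 + i by ring,
    show a + (y ++ v).length + i + 1 = a + 1 + ((y ++ v).length + i) by ring, ← h1, ← h2]

end ThueMorse

theorem stmt3_general (m : ℕ) (y v : List ℕ)
    (hfac : IsFactor (y ++ v ++ y)) (hy : y.length = m) :
    2 ^ delta m ∣ (y ++ v).length := by
  obtain ⟨a, h⟩ := ThueMorse.agreesOn_of_isFactor hfac
  rcases hd : delta m with _ | k
  · exact one_dvd _
  · exact ThueMorse.two_pow_succ_dvd_of_agreesOn k
      (hy ▸ ThueMorse.three_mul_two_pow_lt_of_delta_eq_succ hd) h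

theorem stmt3 (m : ℕ) (hm : 2 ≤ m) (y v : List ℕ)
    (hfac : IsFactor (y ++ v ++ y)) (hy : y.length = m) :
    2 ^ delta m ∣ (y ++ v).length :=
  stmt3_general m y v hfac hy
end

section
/- If m and k are positive integers, then the prefix of the Thue-Morse word of length km is a k-anti-power if and only if the prefix of length 2km is a k-anti-power when each block has length 2m (i.e., m ∈ AP(t,k) iff 2m ∈ AP(t,k)). -/
open Filter

/-!
Indexing from 0, `t(2n) = t(n)` and `t(2n+1) = 1 - t(n)`, so the `i`-th block of length `2m` is the
image of the `i`-th block of length `m` under the Thue-Morse morphism: its letters at even offsets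
reproduce the shorter block and those at odd offsets are determined by it. Hence two blocks of
length `2m` coincide exactly when the corresponding blocks of length `m` do.
-/

lemma tm_two_mul_add (n r : ℕ) (hr : r < 2) : tm (2 * n + r + 1) = (tm (n + 1) + r) % 2 := by
  rcases Nat.eq_zero_or_pos (2 * n + r) with h | h
  · obtain ⟨rfl, rfl⟩ : n = 0 ∧ r = 0 := by omega
    rfl
  have hdigits : Nat.digits 2 (r + 2 * n) = r :: Nat.digits 2 n :=
    Nat.digits_add 2 one_lt_two r n hr (by omega)
  simp only [tm, Nat.add_sub_cancel, add_comm (2 * n) r, hdigits, List.sum_cons]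
  omega

lemma tm_two_mul_add_zero (n : ℕ) : tm (2 * n + 0 + 1) = tm (n + 1) := by
  simpa only [tm, add_zero, Nat.mod_mod] using tm_two_mul_add n 0 two_pos

lemma block_eq_iff (m i j : ℕ) :
    block m i = block m j ↔ ∀ q < m, tm (i * m + q + 1) = tm (j * m + q + 1) := by
  have hlen : ∀ i, (i + 1) * m + 1 - (i * m + 1) = m := fun i => by rw [add_one_mul]; omega
  simp only [block, seg, hlen, List.map_eq_map_iff, List.mem_range]
  refine forall₂_congr fun q _ => ?_
  rw [add_right_comm, add_right_comm (j * m)]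

lemma block_two_mul_eq_iff (m i j : ℕ) :
    block (2 * m) i = block (2 * m) j ↔ block m i = block m j := by
  rw [block_eq_iff, block_eq_iff]
  have hpos : ∀ i a r, i * (2 * m) + (2 * a + r) + 1 = 2 * (i * m + a) + r + 1 := fun _ _ _ => by
    ring
  constructor
  · intro h a ha
    have h_odd := h (2 * a + 0) (by omega)
    rwa [hpos, hpos, tm_two_mul_add_zero, tm_two_mul_add_zero] at h_odd
  · intro h q hq
    obtain ⟨a, r, hr, rfl⟩ : ∃ a r, r < 2 ∧ q = 2 * a + r := ⟨q / 2, q % 2, q.mod_lt two_pos, by omega⟩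
    rw [hpos, hpos, tm_two_mul_add _ _ hr, tm_two_mul_add _ _ hr, h a (by omega)]

theorem stmt7_general (m k : ℕ) :
    IsAntiPowerPrefix m k ↔ IsAntiPowerPrefix (2 * m) k := by
  simp only [IsAntiPowerPrefix, ne_eq, block_two_mul_eq_iff]

theorem stmt7 (m k : ℕ) (hm : 0 < m) (hk : 0 < k) :
    IsAntiPowerPrefix m k ↔ IsAntiPowerPrefix (2 * m) k :=
  stmt7_general m k
end

section
/- For every integer k ≥ 3, the prefix of the Thue-Morse word of length 3k is not a k-anti-power; equivalently, 3 ∉ F(k) for k ≥ 3. -/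
open Filter

theorem not_isAntiPowerPrefix_of_block_eq {m k i j : ℕ} (hi : i < k) (hj : j < k) (hij : i ≠ j)
    (h : block m i = block m j) : ¬ IsAntiPowerPrefix m k :=
  fun hanti => hanti i j hi hj hij h

-- Both blocks are `011`: `t₁t₂t₃` and `t₇t₈t₉`.
theorem block_three_zero_eq_block_three_two : block 3 0 = block 3 2 := by
  simp [block, seg, tm, List.range_succ]

theorem stmt8 (k : ℕ) (hk : 3 ≤ k) : ¬ IsAntiPowerPrefix 3 k :=
  not_isAntiPowerPrefix_of_block_eq (by omega) (by omega) (by decide)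
    block_three_zero_eq_block_three_two
end

section
/- Suppose r, m, ℓ, h, p, q are nonnegative integers with ℓ ≥ 2 satisfying: h < 2^{ℓ-2}; rm = p·2^{ℓ+1} + 2^{ℓ-1} + h; (r+1)m ≤ p·2^{ℓ+1} + 5·2^{ℓ-2}; (r + 2^{ℓ-2})m = q·2^{ℓ+1} + 3·2^{ℓ-2} + h; and t_{p+1} ≠ t_{q+1}. Then the factors t_{rm+1}...t_{(r+1)m} and t_{(r+2^{ℓ-2})m+1}...t_{(r+2^{ℓ-2}+1)m} of the Thue-Morse word are equal. -/
open Filter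

/-!
Write `n = 2 ^ (ℓ - 2)`. Since `t` is the parity of the binary digit sum, a low part below `2 ^ k`
and a high part `c · 2 ^ k` contribute independently: `t(x + c·2^k + 1) ≡ t(x + 1) + t(c + 1)`.
With `8n = 2^(ℓ+1)`, the `j`-th letters of the two factors are therefore
`t(p + 1) + t(2n + u + 1)` and `t(q + 1) + t(3n + u + 1)` mod 2, where `u = h + j < 3n`.
The first summands differ by hypothesis, and so do the second ones: splitting off the last
`ℓ - 2` binary digits reduces them to `t(2 + i + 1) ≠ t(3 + i + 1)` for `i < 3`,
i.e. to the letters `1, 0, 1, 0` of `t_3 t_4 t_5 t_6`. Two flips cancel.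
-/

theorem digits_sum_add_pow_mul {b k a c : ℕ} (hb : 1 < b) (ha : a < b ^ k) :
    (b.digits (a + c * b ^ k)).sum = (b.digits a).sum + (b.digits c).sum := by
  rcases c.eq_zero_or_pos with rfl | hc
  · simp
  obtain ⟨z, hz⟩ := Nat.exists_eq_add_of_le ((Nat.digits_length_le_iff hb a).2 ha)
  rw [mul_comm, hz, ← Nat.digits_append_zeroes_append_digits hb hc]
  simp

theorem tm_succ (n : ℕ) : tm (n + 1) = (Nat.digits 2 n).sum % 2 := by
  simp [tm]

theorem tm_lt_two (i : ℕ) : tm i < 2 :=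
  Nat.mod_lt _ two_pos

theorem tm_add_two_pow_mul {k x : ℕ} (c : ℕ) (hx : x < 2 ^ k) :
    tm (x + c * 2 ^ k + 1) = (tm (x + 1) + tm (c + 1)) % 2 := by
  simp only [tm_succ, digits_sum_add_pow_mul one_lt_two hx]
  exact Nat.add_mod _ _ _

theorem tm_two_mul_two_pow_add_ne (L : ℕ) {u : ℕ} (hu : u < 3 * 2 ^ L) :
    tm (2 * 2 ^ L + u + 1) ≠ tm (3 * 2 ^ L + u + 1) := by
  set v := u % 2 ^ L
  set i := u / 2 ^ L
  have hv : v < 2 ^ L := Nat.mod_lt _ (by positivity)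
  have hi : i < 3 := Nat.div_lt_of_lt_mul (by linarith)
  have hsplit : u = v + i * 2 ^ L := (Nat.mod_add_div' u _).symm
  have hlow : tm (2 + i + 1) ≠ tm (3 + i + 1) := by
    interval_cases i <;> simp [tm]
  rw [show 2 * 2 ^ L + u + 1 = v + (2 + i) * 2 ^ L + 1 by rw [hsplit]; ring,
    show 3 * 2 ^ L + u + 1 = v + (3 + i) * 2 ^ L + 1 by rw [hsplit]; ring,
    tm_add_two_pow_mul _ hv, tm_add_two_pow_mul _ hv]
  have := tm_lt_two (2 + i + 1)
  have := tm_lt_two (3 + i + 1)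
  omega

theorem seg_eq_seg_of_tm_eq {a b c d : ℕ} (hlen : b + 1 - a = d + 1 - c)
    (htm : ∀ j < b + 1 - a, tm (a + j) = tm (c + j)) : seg a b = seg c d := by
  unfold seg
  rw [← hlen]
  exact List.map_congr_left fun j hj => htm j (List.mem_range.1 hj)

theorem stmt10 (r m ℓ h p q : ℕ) (hℓ : 2 ≤ ℓ)
    (h1 : h < 2 ^ (ℓ - 2))
    (h2 : r * m = p * 2 ^ (ℓ + 1) + 2 ^ (ℓ - 1) + h)
    (h3 : (r + 1) * m ≤ p * 2 ^ (ℓ + 1) + 5 * 2 ^ (ℓ - 2))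
    (h4 : (r + 2 ^ (ℓ - 2)) * m = q * 2 ^ (ℓ + 1) + 3 * 2 ^ (ℓ - 2) + h)
    (h5 : tm (p + 1) ≠ tm (q + 1)) :
    seg (r * m + 1) ((r + 1) * m) =
      seg ((r + 2 ^ (ℓ - 2)) * m + 1) ((r + 2 ^ (ℓ - 2) + 1) * m) := by
  obtain ⟨L, rfl⟩ := Nat.exists_eq_add_of_le' hℓ
  have hpow_high : 2 ^ (L + 2 + 1) = 8 * 2 ^ L := by ring
  have hpow_mid : 2 ^ (L + 2 - 1) = 2 * 2 ^ L := by rw [show L + 2 - 1 = L + 1 by omega]; ring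
  simp only [Nat.add_sub_cancel, hpow_mid, add_mul, one_mul] at h1 h2 h3 h4 ⊢
  refine seg_eq_seg_of_tm_eq (by omega) fun j hj => ?_
  have hu : h + j < 3 * 2 ^ L := by omega
  rw [show r * m + 1 + j = 2 * 2 ^ L + (h + j) + p * 2 ^ (L + 2 + 1) + 1 by omega,
    show r * m + 2 ^ L * m + 1 + j = 3 * 2 ^ L + (h + j) + q * 2 ^ (L + 2 + 1) + 1 by omega,
    tm_add_two_pow_mul _ (by omega), tm_add_two_pow_mul _ (by omega)]
  have := tm_two_mul_two_pow_add_ne L hu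
  have := tm_lt_two (p + 1)
  have := tm_lt_two (q + 1)
  have := tm_lt_two (2 * 2 ^ L + (h + j) + 1)
  have := tm_lt_two (3 * 2 ^ L + (h + j) + 1)
  omega
end
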